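/- Fix t > 0 and p ∈ (1, ∞). Let X be s-doubling for every s > 0 and satisfy property (∗)_t, let E ⊂ X be bounded with μ(E) < ∞, and let F ⊂ L^p(X) be a bounded subset. Then the family {(A_t f)·χ_E : f ∈ F} is relatively compact (totally bounded) in L^p(X). -/

import Mathlib

open MeasureTheory Metric Set ENNReal NNReal

noncomputable def avgOp {X : Type*} [MetricSpace X] [MeasurableSpace X]
    (μ : MeasureTheory.Measure X) (t : ℝ) (f : X → ℝ) (x : X) : ℝ :=
  (μ (Metric.closedBall x t)).toReal⁻¹ * ∫ y in Metric.closedBall x t, f y ∂μ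

theorem doub_iter {X : Type*} [MetricSpace X] [MeasurableSpace X] (μ : Measure X)
    (hdoub : ∀ s : ℝ, 0 < s → ∃ γ : ℝ, 1 ≤ γ ∧
      ∀ x : X, μ (closedBall x (2 * s)) ≤ ENNReal.ofReal γ * μ (closedBall x s))
    (u : ℝ) (hu : 0 < u) (k : ℕ) :
    ∃ Γ : ℝ, 1 ≤ Γ ∧ ∀ x : X,
      μ (closedBall x (2 ^ k * u)) ≤ ENNReal.ofReal Γ * μ (closedBall x u) := by
  induction k with
  | zero => exact ⟨1, le_refl 1, fun x => by simp⟩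
  | succ k ih =>
    obtain ⟨Γ, hΓ, hΓ2⟩ := ih
    obtain ⟨γ, hγ, hγ2⟩ := hdoub (2 ^ k * u) (by positivity)
    refine ⟨γ * Γ, le_trans hγ (le_mul_of_one_le_right (by linarith) hΓ), fun x => ?_⟩
    have h2 : (2:ℝ) ^ (k+1) * u = 2 * (2 ^ k * u) := by ring
    rw [h2]
    calc μ (closedBall x (2 * (2 ^ k * u)))
        ≤ ENNReal.ofReal γ * μ (closedBall x (2 ^ k * u)) := hγ2 x
      _ ≤ ENNReal.ofReal γ * (ENNReal.ofReal Γ * μ (closedBall x u)) := by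
          gcongr; exact hΓ2 x
      _ = ENNReal.ofReal (γ * Γ) * μ (closedBall x u) := by
          rw [ENNReal.ofReal_mul (by linarith), mul_assoc]

theorem lower_bound {X : Type*} [MetricSpace X] [MeasurableSpace X] (μ : Measure X)
    (hball : ∀ (x : X) (u : ℝ), 0 < u → 0 < μ (closedBall x u) ∧ μ (closedBall x u) < ⊤)
    (hdoub : ∀ s : ℝ, 0 < s → ∃ γ : ℝ, 1 ≤ γ ∧
      ∀ x : X, μ (closedBall x (2 * s)) ≤ ENNReal.ofReal γ * μ (closedBall x s))
    (x0 : X) (R : ℝ) (hR : 0 < R) (u : ℝ) (hu : 0 < u) :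
    ∃ m : ℝ≥0∞, 0 < m ∧ m ≠ ⊤ ∧ ∀ x : X, dist x x0 ≤ R → m ≤ μ (closedBall x u) := by
  obtain ⟨k, hk⟩ := pow_unbounded_of_one_lt (R := ℝ) (2 * R / u) one_lt_two
  have hku : 2 * R ≤ 2 ^ k * u := by
    rw [div_lt_iff₀ hu] at hk; linarith
  obtain ⟨Γ, hΓ, hΓ2⟩ := doub_iter μ hdoub u hu k
  have hΓ0 : ENNReal.ofReal Γ ≠ 0 := by
    simp [ENNReal.ofReal_eq_zero]; linarith
  have hΓt : ENNReal.ofReal Γ ≠ ⊤ := ENNReal.ofReal_ne_top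
  refine ⟨μ (closedBall x0 R) / ENNReal.ofReal Γ, ?_, ?_, fun x hx => ?_⟩
  · exact ENNReal.div_pos (hball x0 R hR).1.ne' hΓt
  · exact (ENNReal.div_lt_top (hball x0 R hR).2.ne hΓ0).ne
  · rw [ENNReal.div_le_iff hΓ0 hΓt]
    have hsub : closedBall x0 R ⊆ closedBall x (2 ^ k * u) := by
      intro y hy
      simp only [mem_closedBall] at *
      calc dist y x ≤ dist y x0 + dist x0 x := dist_triangle _ _ _
        _ ≤ R + R := by rw [dist_comm x0 x] at *; exact add_le_add hy hx
        _ ≤ 2 ^ k * u := by linarith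
    calc μ (closedBall x0 R) ≤ μ (closedBall x (2 ^ k * u)) := measure_mono hsub
      _ ≤ ENNReal.ofReal Γ * μ (closedBall x u) := hΓ2 x
      _ = μ (closedBall x u) * ENNReal.ofReal Γ := mul_comm _ _

theorem holder_set {X : Type*} [MeasurableSpace X] (μ : Measure X)
    {p : ℝ≥0∞} (hp1 : 1 < p) (hp2 : p ≠ ⊤) {q : ℝ} (hq : p.toReal.HolderConjugate q)
    (f : X → ℝ) (hf : AEStronglyMeasurable f μ) (S : Set X) (hS : MeasurableSet S) :
    ∫⁻ x in S, (‖f x‖₊ : ℝ≥0∞) ∂μ ≤ eLpNorm f p μ * μ S ^ (1/q) := by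
  have hp0 : p ≠ 0 := by positivity
  set φ : X → ℝ≥0∞ := fun x => (‖f x‖₊ : ℝ≥0∞) with hφ
  set ψ : X → ℝ≥0∞ := S.indicator (fun _ => (1:ℝ≥0∞)) with hψ
  have heq : ∫⁻ x in S, (‖f x‖₊ : ℝ≥0∞) ∂μ = ∫⁻ x, (φ * ψ) x ∂μ := by
    rw [← lintegral_indicator hS]
    congr 1; funext x
    by_cases hx : x ∈ S <;> simp [hψ, hφ, Set.indicator_apply, hx]
  rw [heq]
  have hψm : AEMeasurable ψ μ :=
    ((measurable_const (a := (1:ℝ≥0∞))).indicator hS).aemeasurable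
  have h := ENNReal.lintegral_mul_le_Lp_mul_Lq μ hq (f := φ) (g := ψ) hf.enorm hψm
  refine h.trans (le_of_eq ?_)
  congr 1
  · rw [eLpNorm_eq_lintegral_rpow_enorm_toReal hp0 hp2]; rfl
  · congr 1
    have : ∀ x, ψ x ^ q = ψ x := by
      intro x
      by_cases hx : x ∈ S <;>
        simp [hψ, Set.indicator_apply, hx, ENNReal.zero_rpow_of_pos hq.symm.pos]
    simp only [this]
    rw [hψ, lintegral_indicator_const hS, one_mul]

theorem memLp_integrableOn {X : Type*} [MeasurableSpace X] {μ : Measure X}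
    {p : ℝ≥0∞} (hp1 : 1 ≤ p) {f : X → ℝ} (hf : MemLp f p μ)
    (S : Set X) (hS : μ S ≠ ⊤) : IntegrableOn f S μ := by
  haveI : Fact (μ S < ⊤) := ⟨hS.lt_top⟩
  exact memLp_one_iff_integrable.mp (MemLp.mono_exponent (MemLp.restrict S hf) hp1)

theorem int_bound {X : Type*} [MeasurableSpace X] (μ : Measure X)
    {p : ℝ≥0∞} (hp1 : 1 < p) (hp2 : p ≠ ⊤) {q : ℝ} (hq : p.toReal.HolderConjugate q)
    {C : ℝ≥0} (f : X → ℝ) (hf : MemLp f p μ) (hfC : eLpNorm f p μ ≤ C)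
    (S : Set X) (hS : MeasurableSet S) (u : ℝ≥0∞) (hSu : μ S ≤ u) (hu : u ≠ ⊤) :
    |∫ z in S, f z ∂μ| ≤ ((C : ℝ≥0∞) * u ^ (1/q)).toReal := by
  have hq0 : 0 < 1/q := by have := hq.symm.pos; positivity
  have h1 : |∫ z in S, f z ∂μ| ≤ (∫⁻ z in S, (‖f z‖₊ : ℝ≥0∞) ∂μ).toReal := by
    calc |∫ z in S, f z ∂μ| = ‖∫ z in S, f z ∂μ‖ := (Real.norm_eq_abs _).symm
      _ ≤ (∫⁻ z in S, ENNReal.ofReal ‖f z‖ ∂μ).toReal := norm_integral_le_lintegral_norm f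
      _ = (∫⁻ z in S, (‖f z‖₊ : ℝ≥0∞) ∂μ).toReal := by
          simp only [ofReal_norm_eq_enorm, enorm_eq_nnnorm]
  refine h1.trans (ENNReal.toReal_mono
    (ENNReal.mul_ne_top ENNReal.coe_ne_top (ENNReal.rpow_ne_top_of_nonneg hq0.le hu)) ?_)
  refine (holder_set μ hp1 hp2 hq f hf.aestronglyMeasurable S hS).trans ?_
  exact mul_le_mul' hfC (ENNReal.rpow_le_rpow hSu hq0.le)

theorem key_est {X : Type*} [MetricSpace X] [MeasurableSpace X] [BorelSpace X] (μ : Measure X)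
    {p : ℝ≥0∞} (hp1 : 1 < p) (hp2 : p ≠ ⊤) {q : ℝ} (hq : p.toReal.HolderConjugate q)
    (t : ℝ) (x y : X)
    (hx0 : μ (closedBall x t) ≠ 0) (hxt : μ (closedBall x t) ≠ ⊤)
    (hy0 : μ (closedBall y t) ≠ 0) (hyt : μ (closedBall y t) ≠ ⊤)
    {m V : ℝ≥0∞} (hm0 : m ≠ 0) (hVt : V ≠ ⊤)
    (hmx : m ≤ μ (closedBall x t)) (hmy : m ≤ μ (closedBall y t))
    (hVy : μ (closedBall y t) ≤ V)
    {C : ℝ≥0} (f : X → ℝ) (hf : MemLp f p μ) (hfC : eLpNorm f p μ ≤ C) :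
    |avgOp μ t f x - avgOp μ t f y| ≤
      (m⁻¹ * (2 * (↑C * μ (symmDiff (closedBall x t) (closedBall y t)) ^ (1/q)))
        + μ (symmDiff (closedBall x t) (closedBall y t))
          * (m⁻¹ * m⁻¹ * (↑C * V ^ (1/q)))).toReal := by
  set Bx := closedBall x t with hBx
  set By := closedBall y t with hBy
  set Δ : Set X := symmDiff Bx By with hΔdef
  have hmt : m ≠ ⊤ := (hmx.trans_lt hxt.lt_top).ne
  have hΔsub : Δ ⊆ Bx ∪ By := by
    rw [hΔdef, Set.symmDiff_def]
    exact Set.union_subset_union Set.diff_subset Set.diff_subset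
  have hΔfin : μ Δ ≠ ⊤ := by
    refine ((measure_mono hΔsub).trans_lt ?_).ne
    exact (measure_union_le _ _).trans_lt (by
      exact ENNReal.add_lt_top.mpr ⟨hxt.lt_top, hyt.lt_top⟩)
  have hq0 : 0 < 1/q := by have := hq.symm.pos; positivity
  set a := (μ Bx).toReal with ha'
  set b := (μ By).toReal with hb'
  have ha : 0 < a := ENNReal.toReal_pos hx0 hxt
  have hb : 0 < b := ENNReal.toReal_pos hy0 hyt
  have hmT : 0 < m.toReal := ENNReal.toReal_pos hm0 hmt
  have hma : m.toReal ≤ a := ENNReal.toReal_mono hxt hmx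
  have hmb : m.toReal ≤ b := ENNReal.toReal_mono hyt hmy
  set I := ∫ z in Bx, f z ∂μ with hI'
  set J := ∫ z in By, f z ∂μ with hJ'
  have hintx : IntegrableOn f Bx μ := memLp_integrableOn hp1.le hf _ hxt
  have hinty : IntegrableOn f By μ := memLp_integrableOn hp1.le hf _ hyt
  -- generic bound on integrals over small sets
  have habs : ∀ S : Set X, MeasurableSet S → ∀ u : ℝ≥0∞, μ S ≤ u → u ≠ ⊤ →
      |∫ z in S, f z ∂μ| ≤ ((C : ℝ≥0∞) * u ^ (1/q)).toReal :=
    fun S hS u hSu hu => int_bound μ hp1 hp2 hq f hf hfC S hS u hSu hu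
  have hmeasx : MeasurableSet (Bx \ By) := measurableSet_closedBall.diff measurableSet_closedBall
  have hmeasy : MeasurableSet (By \ Bx) := measurableSet_closedBall.diff measurableSet_closedBall
  have hIJ : |I - J| ≤ 2 * (↑C * μ Δ ^ (1/q)).toReal := by
    have h1 := integral_inter_add_diff (s := Bx) (t := By) (μ := μ) measurableSet_closedBall hintx
    have h2 := integral_inter_add_diff (s := By) (t := Bx) (μ := μ) measurableSet_closedBall hinty
    have hIJ2 : I - J = (∫ z in Bx \ By, f z ∂μ) - (∫ z in By \ Bx, f z ∂μ) := by
      rw [hI', hJ', ← h1, ← h2, Set.inter_comm]; ring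
    have d1 : |∫ z in Bx \ By, f z ∂μ| ≤ (↑C * μ Δ ^ (1/q)).toReal :=
      habs _ hmeasx _ (measure_mono (by rw [hΔdef, Set.symmDiff_def]; exact Set.subset_union_left)) hΔfin
    have d2 : |∫ z in By \ Bx, f z ∂μ| ≤ (↑C * μ Δ ^ (1/q)).toReal :=
      habs _ hmeasy _ (measure_mono (by rw [hΔdef, Set.symmDiff_def]; exact Set.subset_union_right)) hΔfin
    calc |I - J| ≤ |∫ z in Bx \ By, f z ∂μ| + |∫ z in By \ Bx, f z ∂μ| := by
          rw [hIJ2]; exact abs_sub _ _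
      _ ≤ 2 * (↑C * μ Δ ^ (1/q)).toReal := by linarith
  have hJle : |J| ≤ (↑C * V ^ (1/q)).toReal :=
    habs _ measurableSet_closedBall _ hVy hVt
  -- |b - a| ≤ μ Δ
  have hba : |b - a| ≤ (μ Δ).toReal := by
    have hxy : μ By ≤ μ Bx + μ Δ := by
      refine (measure_mono ?_).trans (measure_union_le _ _)
      intro z hz
      by_cases hzx : z ∈ Bx
      · exact Or.inl hzx
      · exact Or.inr (by rw [hΔdef, Set.symmDiff_def]; exact Or.inr ⟨hz, hzx⟩)
    have hyx : μ Bx ≤ μ By + μ Δ := by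
      refine (measure_mono ?_).trans (measure_union_le _ _)
      intro z hz
      by_cases hzy : z ∈ By
      · exact Or.inl hzy
      · exact Or.inr (by rw [hΔdef, Set.symmDiff_def]; exact Or.inl ⟨hz, hzy⟩)
    have h1 : b ≤ a + (μ Δ).toReal := by
      rw [ha', ← ENNReal.toReal_add hxt hΔfin]
      exact ENNReal.toReal_mono (by finiteness) hxy
    have h2 : a ≤ b + (μ Δ).toReal := by
      rw [hb', ← ENNReal.toReal_add hyt hΔfin]
      exact ENNReal.toReal_mono (by finiteness) hyx
    rw [abs_sub_le_iff]
    constructor <;> linarith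
  -- decomposition
  have key : avgOp μ t f x - avgOp μ t f y = a⁻¹ * (I - J) + (a⁻¹ - b⁻¹) * J := by
    simp only [avgOp, ← hBx, ← hBy, ← ha', ← hb', ← hI', ← hJ']
    ring
  have hainv : a⁻¹ ≤ m.toReal⁻¹ := inv_anti₀ hmT hma
  have hbinv : b⁻¹ ≤ m.toReal⁻¹ := inv_anti₀ hmT hmb
  have habdiff : |a⁻¹ - b⁻¹| ≤ (μ Δ).toReal * (m.toReal⁻¹ * m.toReal⁻¹) := by
    have heq : a⁻¹ - b⁻¹ = (b - a) / (a * b) := by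
      field_simp
    rw [heq, abs_div, abs_of_pos (mul_pos ha hb)]
    rw [div_eq_mul_inv, mul_inv]
    have h1 : a⁻¹ ≤ m.toReal⁻¹ := hainv
    have h2 : b⁻¹ ≤ m.toReal⁻¹ := hbinv
    have := mul_le_mul hba (mul_le_mul h1 h2 (by positivity) (by positivity))
      (by positivity) (ENNReal.toReal_nonneg)
    linarith [this]
  have step : |avgOp μ t f x - avgOp μ t f y| ≤
      m.toReal⁻¹ * (2 * (↑C * μ Δ ^ (1/q)).toReal)
        + (μ Δ).toReal * (m.toReal⁻¹ * m.toReal⁻¹ * (↑C * V ^ (1/q)).toReal) := by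
    rw [key]
    calc |a⁻¹ * (I - J) + (a⁻¹ - b⁻¹) * J|
        ≤ |a⁻¹ * (I - J)| + |(a⁻¹ - b⁻¹) * J| := abs_add_le _ _
      _ ≤ m.toReal⁻¹ * (2 * (↑C * μ Δ ^ (1/q)).toReal)
          + (μ Δ).toReal * (m.toReal⁻¹ * m.toReal⁻¹ * (↑C * V ^ (1/q)).toReal) := by
        gcongr ?_ + ?_
        · rw [abs_mul, abs_of_pos (inv_pos.mpr ha)]
          exact mul_le_mul hainv hIJ (abs_nonneg _) (by positivity)
        · rw [abs_mul, ← mul_assoc]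
          exact mul_le_mul habdiff hJle (abs_nonneg _) (by positivity)
  refine step.trans (le_of_eq ?_)
  have hfin0 : (↑C * μ Δ ^ (1/q) : ℝ≥0∞) ≠ ⊤ :=
    ENNReal.mul_ne_top ENNReal.coe_ne_top (ENNReal.rpow_ne_top_of_nonneg hq0.le hΔfin)
  have hfinV : (↑C * V ^ (1/q) : ℝ≥0∞) ≠ ⊤ :=
    ENNReal.mul_ne_top ENNReal.coe_ne_top (ENNReal.rpow_ne_top_of_nonneg hq0.le hVt)
  have hminv : (m⁻¹ : ℝ≥0∞) ≠ ⊤ := ENNReal.inv_ne_top.mpr hm0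
  have hfin1 : m⁻¹ * (2 * (↑C * μ Δ ^ (1/q))) ≠ ⊤ :=
    ENNReal.mul_ne_top hminv (ENNReal.mul_ne_top (by norm_num) hfin0)
  have hfin2 : μ Δ * (m⁻¹ * m⁻¹ * (↑C * V ^ (1/q))) ≠ ⊤ :=
    ENNReal.mul_ne_top hΔfin (ENNReal.mul_ne_top (ENNReal.mul_ne_top hminv hminv) hfinV)
  rw [ENNReal.toReal_add hfin1 hfin2, ENNReal.toReal_mul, ENNReal.toReal_mul,
    ENNReal.toReal_mul, ENNReal.toReal_mul, ENNReal.toReal_mul, ENNReal.toReal_inv]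
  norm_num

theorem finite_cover {X : Type*} [MetricSpace X] [MeasurableSpace X] [BorelSpace X]
    (μ : Measure X) (E : Set X) (x0 : X) (R : ℝ) (hER : E ⊆ closedBall x0 R)
    (δ : ℝ) (hδ : 0 < δ) (m : ℝ≥0∞) (hm0 : m ≠ 0) (hmt : m ≠ ⊤)
    (hlow : ∀ x ∈ E, m ≤ μ (closedBall x (δ/3)))
    (hfin : μ (closedBall x0 (R + δ)) ≠ ⊤) :
    ∃ n : ℕ, ∃ pts : Fin n → X, (∀ i, pts i ∈ E) ∧ ∀ x ∈ E, ∃ i, dist x (pts i) < δ := by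
  classical
  by_contra hcon
  push_neg at hcon
  -- build arbitrarily large δ-separated subsets of E
  have claim : ∀ n : ℕ, ∃ S : Finset X, ↑S ⊆ E ∧
      (∀ a ∈ S, ∀ b ∈ S, a ≠ b → δ ≤ dist a b) ∧ n ≤ S.card := by
    intro n
    induction n with
    | zero => exact ⟨∅, by simp, by simp, by simp⟩
    | succ n ih =>
      obtain ⟨S, hSE, hSsep, hScard⟩ := ih
      set pts : Fin S.card → X := fun i => (S.equivFin.symm i : X) with hpts
      have hptsE : ∀ i, pts i ∈ E := fun i => hSE (S.equivFin.symm i).2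
      obtain ⟨x, hxE, hxfar⟩ := hcon S.card pts hptsE
      have hxfar' : ∀ y ∈ S, δ ≤ dist x y := by
        intro y hy
        have := hxfar (S.equivFin ⟨y, hy⟩)
        simpa [hpts] using this
      have hxS : x ∉ S := by
        intro hxS
        have := hxfar' x hxS
        simp at this; linarith
      refine ⟨insert x S, ?_, ?_, ?_⟩
      · rw [Finset.coe_insert]
        exact Set.insert_subset hxE hSE
      · intro a ha b hb hab
        rcases Finset.mem_insert.mp ha with rfl | ha'
        · rcases Finset.mem_insert.mp hb with rfl | hb'
          · exact absurd rfl hab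
          · exact hxfar' b hb'
        · rcases Finset.mem_insert.mp hb with rfl | hb'
          · rw [dist_comm]; exact hxfar' a ha'
          · exact hSsep a ha' b hb' hab
      · rw [Finset.card_insert_of_notMem hxS]; omega
  -- cardinality bound
  obtain ⟨N, hN⟩ := ENNReal.exists_nat_gt
    (ENNReal.div_lt_top hfin hm0).ne
  obtain ⟨S, hSE, hSsep, hScard⟩ := claim N
  have hdisj : (↑S : Set X).PairwiseDisjoint (fun y => closedBall y (δ/3)) := by
    intro a ha b hb hab
    apply closedBall_disjoint_closedBall
    have := hSsep a ha b hb hab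
    linarith
  have hunion : (⋃ y ∈ S, closedBall y (δ/3)) ⊆ closedBall x0 (R + δ) := by
    intro z hz
    simp only [Set.mem_iUnion] at hz
    obtain ⟨y, hy, hzy⟩ := hz
    have hyE : y ∈ closedBall x0 R := hER (hSE hy)
    simp only [mem_closedBall] at *
    calc dist z x0 ≤ dist z y + dist y x0 := dist_triangle _ _ _
      _ ≤ δ/3 + R := add_le_add hzy hyE
      _ ≤ R + δ := by linarith
  have hsum : (S.card : ℝ≥0∞) * m ≤ μ (closedBall x0 (R + δ)) := by
    calc (S.card : ℝ≥0∞) * m = ∑ _y ∈ S, m := by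
          rw [Finset.sum_const, nsmul_eq_mul]
      _ ≤ ∑ y ∈ S, μ (closedBall y (δ/3)) :=
          Finset.sum_le_sum (fun y hy => hlow y (hSE hy))
      _ = μ (⋃ y ∈ S, closedBall y (δ/3)) :=
          (measure_biUnion_finset hdisj (fun y _ => measurableSet_closedBall)).symm
      _ ≤ μ (closedBall x0 (R + δ)) := measure_mono hunion
  have hcard : (S.card : ℝ≥0∞) ≤ μ (closedBall x0 (R + δ)) / m :=
    ENNReal.le_div_iff_mul_le (Or.inl hm0) (Or.inl hmt) |>.mpr hsum
  have : (N : ℝ≥0∞) ≤ μ (closedBall x0 (R + δ)) / m :=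
    le_trans (by exact_mod_cast Nat.cast_le.mpr hScard) hcard
  exact absurd hN (not_lt.mpr this)

theorem stmt18 {X : Type*} [MetricSpace X] [MeasurableSpace X] (μ : Measure X)
    [BorelSpace X]
    (hball : ∀ (x : X) (u : ℝ), 0 < u → 0 < μ (closedBall x u) ∧ μ (closedBall x u) < ⊤)
    (t : ℝ) (ht : 0 < t) (p : ℝ≥0∞) (hp1 : 1 < p) (hp2 : p ≠ ⊤)
    (hdoub : ∀ s : ℝ, 0 < s → ∃ γ : ℝ, 1 ≤ γ ∧
      ∀ x : X, μ (closedBall x (2 * s)) ≤ ENNReal.ofReal γ * μ (closedBall x s))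
    (hstart : ∀ ε : ℝ≥0∞, 0 < ε → ∃ δ : ℝ, 0 < δ ∧ ∀ x y : X, dist x y < δ →
      μ (symmDiff (closedBall x t) (closedBall y t)) < ε)
    (E : Set X) (hE : Bornology.IsBounded E) (hEμ : μ E < ⊤)
    (F : Set (X → ℝ)) (C : ℝ≥0)
    (hF : ∀ f ∈ F, MemLp f p μ ∧ eLpNorm f p μ ≤ C) :
    ∀ ε : ℝ≥0∞, 0 < ε → ∃ G : Finset (X → ℝ), ∀ f ∈ F, ∃ g ∈ G,
      eLpNorm (fun x => E.indicator (avgOp μ t f) x - g x) p μ ≤ ε := by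
  classical
  intro ε hε
  rcases Set.eq_empty_or_nonempty E with rfl | ⟨x0, hx0E⟩
  · exact ⟨{fun _ => 0}, fun f hf => ⟨_, Finset.mem_singleton_self _, by simp⟩⟩
  have hp0 : p ≠ 0 := by positivity
  -- exponents
  have hr1 : 1 < p.toReal := by
    have := (ENNReal.toReal_lt_toReal ENNReal.one_ne_top hp2).mpr hp1
    rwa [ENNReal.toReal_one] at this
  set q : ℝ := p.toReal.conjExponent with hqdef
  have hq : p.toReal.HolderConjugate q := Real.HolderConjugate.conjExponent hr1
  have hq0 : 0 < 1/q := by have := hq.symm.pos; positivity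
  have hr0 : 0 < 1/p.toReal := by positivity
  -- bounding ball for E
  obtain ⟨R0, hR0⟩ := hE.subset_closedBall x0
  set R : ℝ := max R0 1 with hRdef
  have hR : 0 < R := lt_of_lt_of_le one_pos (le_max_right _ _)
  have hER : E ⊆ closedBall x0 R :=
    hR0.trans (closedBall_subset_closedBall (le_max_left _ _))
  -- lower bound on ball measures at scale t on E
  obtain ⟨m, hm0, hmt, hmle⟩ := lower_bound μ hball hdoub x0 R hR t ht
  -- uniform upper bound V at scale t on E
  set V : ℝ≥0∞ := μ (closedBall x0 (R + t)) with hVdef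
  have hVt : V ≠ ⊤ := (hball x0 (R + t) (by linarith)).2.ne
  have hVle : ∀ x ∈ E, μ (closedBall x t) ≤ V := by
    intro x hx
    refine measure_mono (fun z hz => ?_)
    simp only [mem_closedBall] at *
    have hxx0 : dist x x0 ≤ R := hER hx
    calc dist z x0 ≤ dist z x + dist x x0 := dist_triangle _ _ _
      _ ≤ t + R := add_le_add hz hxx0
      _ = R + t := by ring
  set K : ℝ≥0∞ := (C : ℝ≥0∞) * V ^ (1/q) with hKdef
  have hKt : K ≠ ⊤ :=
    ENNReal.mul_ne_top ENNReal.coe_ne_top (ENNReal.rpow_ne_top_of_nonneg hq0.le hVt)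
  have hminvt : (m⁻¹ : ℝ≥0∞) ≠ ⊤ := ENNReal.inv_ne_top.mpr hm0.ne'
  set M : ℝ := (m⁻¹ * K).toReal with hMdef
  -- choice of τ
  set B0 : Set X := closedBall x0 R with hB0def
  set W : ℝ≥0∞ := μ B0 ^ (1/p.toReal) with hWdef
  have hW0 : W ≠ 0 := (ENNReal.rpow_pos (hball x0 R hR).1 (hball x0 R hR).2.ne).ne'
  have hWt : W ≠ ⊤ := ENNReal.rpow_ne_top_of_nonneg hr0.le (hball x0 R hR).2.ne
  set ε' : ℝ≥0∞ := min ε 1 with hε'def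
  have hε'0 : ε' ≠ 0 := (lt_min hε zero_lt_one).ne'
  have hε't : ε' ≠ ⊤ := ((min_le_right _ _).trans_lt ENNReal.one_lt_top).ne
  set τ : ℝ := (ε' / W).toReal with hτdef
  have hτpos : 0 < τ := ENNReal.toReal_pos
    (by simp [ENNReal.div_eq_top, hε'0, hWt, hε't, hW0])
    (by simp [ENNReal.div_eq_top, hε'0, hWt, hε't, hW0])
  have hτε : ENNReal.ofReal τ * W ≤ ε := by
    rw [hτdef, ENNReal.ofReal_toReal (by simp [ENNReal.div_eq_top, hε't, hW0]),
      ENNReal.div_mul_cancel hW0 hWt]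
    exact min_le_left _ _
  set ω : ℝ := τ/2 with hωdef
  have hω : 0 < ω := by positivity
  -- equicontinuity modulus: choose u₀ then δ
  have hT : Filter.Tendsto
      (fun u : ℝ≥0∞ => m⁻¹ * (2 * ((C : ℝ≥0∞) * u ^ (1/q))) + u * (m⁻¹ * m⁻¹ * K))
      (nhds 0) (nhds 0) := by
    have T1 : Filter.Tendsto (fun u : ℝ≥0∞ => u ^ (1/q)) (nhds 0) (nhds 0) := by
      have := (ENNReal.continuous_rpow_const (y := 1/q)).tendsto 0
      rwa [ENNReal.zero_rpow_of_pos hq0] at this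
    have T2 : Filter.Tendsto (fun u : ℝ≥0∞ => m⁻¹ * (2 * ((C : ℝ≥0∞) * u ^ (1/q))))
        (nhds 0) (nhds 0) := by
      have h2 := ENNReal.Tendsto.const_mul (a := (C : ℝ≥0∞)) T1 (Or.inr ENNReal.coe_ne_top)
      rw [mul_zero] at h2
      have h3 := ENNReal.Tendsto.const_mul (a := (2 : ℝ≥0∞)) h2 (Or.inr (by norm_num))
      rw [mul_zero] at h3
      have h4 := ENNReal.Tendsto.const_mul (a := (m⁻¹ : ℝ≥0∞)) h3 (Or.inr hminvt)
      rwa [mul_zero] at h4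
    have T3 : Filter.Tendsto (fun u : ℝ≥0∞ => u * (m⁻¹ * m⁻¹ * K)) (nhds 0) (nhds 0) := by
      have h2 : Filter.Tendsto (fun u : ℝ≥0∞ => u * (m⁻¹ * m⁻¹ * K)) (nhds 0)
          (nhds (0 * (m⁻¹ * m⁻¹ * K))) :=
        ENNReal.Tendsto.mul_const Filter.tendsto_id
          (Or.inr (ENNReal.mul_ne_top (ENNReal.mul_ne_top hminvt hminvt) hKt))
      rwa [zero_mul] at h2
    have := T2.add T3
    rwa [add_zero] at this
  have hev : ∀ᶠ u in nhds (0:ℝ≥0∞),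
      m⁻¹ * (2 * ((C : ℝ≥0∞) * u ^ (1/q))) + u * (m⁻¹ * m⁻¹ * K) < ENNReal.ofReal ω :=
    hT.eventually_lt_const (by simp [ENNReal.ofReal_pos, hω])
  rw [ENNReal.nhds_zero_basis.eventually_iff] at hev
  obtain ⟨u₀, hu₀pos, hu₀⟩ := hev
  obtain ⟨δ, hδpos, hδ⟩ := hstart u₀ hu₀pos
  -- equicontinuity
  have hequi : ∀ f : X → ℝ, MemLp f p μ → eLpNorm f p μ ≤ C →
      ∀ z ∈ E, ∀ w ∈ E, dist z w < δ → |avgOp μ t f z - avgOp μ t f w| ≤ ω := by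
    intro f hfmem hfC z hz w hw hzw
    have hballz := hball z t ht
    have hballw := hball w t ht
    have h1 := key_est μ hp1 hp2 hq t z w hballz.1.ne' hballz.2.ne
      hballw.1.ne' hballw.2.ne hm0.ne' hVt (hmle z (hER hz)) (hmle w (hER hw))
      (hVle w hw) f hfmem hfC
    refine h1.trans ?_
    have h2 : μ (symmDiff (closedBall z t) (closedBall w t)) ∈ Set.Iio u₀ := hδ z w hzw
    have h3 := le_of_lt (hu₀ h2)
    calc (m⁻¹ * (2 * ((C:ℝ≥0∞) * μ (symmDiff (closedBall z t) (closedBall w t)) ^ (1/q)))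
        + μ (symmDiff (closedBall z t) (closedBall w t)) * (m⁻¹ * m⁻¹ * K)).toReal
        ≤ (ENNReal.ofReal ω).toReal := ENNReal.toReal_mono ENNReal.ofReal_ne_top h3
      _ = ω := ENNReal.toReal_ofReal hω.le
  -- finite cover of E at scale δ
  obtain ⟨m2, hm20, hm2t, hm2le⟩ := lower_bound μ hball hdoub x0 R hR (δ/3) (by linarith)
  obtain ⟨n, pts, hptsE, hcov⟩ := finite_cover μ E x0 R hER δ hδpos m2 hm20.ne' hm2t
    (fun x hx => hm2le x (hER hx)) (hball x0 (R + δ) (by linarith)).2.ne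
  -- finite net for the cube
  set η : ℝ := τ/2 with hηdef
  have hη : 0 < η := by positivity
  have hcube : TotallyBounded (Set.Icc (fun _ => -M) (fun _ => M) : Set (Fin n → ℝ)) :=
    isCompact_Icc.totallyBounded
  obtain ⟨net, hnetfin, hnetcov⟩ := totallyBounded_iff.mp hcube η hη
  set mk : (Fin n → ℝ) → (X → ℝ) :=
    fun c x => if hx : x ∈ E then c (hcov x hx).choose else 0 with hmkdef
  refine ⟨hnetfin.toFinset.image mk, fun f hfF => ?_⟩
  obtain ⟨hfmem, hfC⟩ := hF f hfF
  -- uniform bound on avgOp over E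
  have hbound : ∀ x ∈ E, |avgOp μ t f x| ≤ M := by
    intro x hx
    have hballx := hball x t ht
    have hI := int_bound μ hp1 hp2 hq f hfmem hfC (closedBall x t)
      measurableSet_closedBall V (hVle x hx) hVt
    have ha : (0:ℝ) < (μ (closedBall x t)).toReal :=
      ENNReal.toReal_pos hballx.1.ne' hballx.2.ne
    have hmT : (0:ℝ) < m.toReal := ENNReal.toReal_pos hm0.ne' hmt
    have hainv : (μ (closedBall x t)).toReal⁻¹ ≤ m.toReal⁻¹ :=
      inv_anti₀ hmT (ENNReal.toReal_mono hballx.2.ne (hmle x (hER hx)))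
    calc |avgOp μ t f x|
        = (μ (closedBall x t)).toReal⁻¹ * |∫ z in closedBall x t, f z ∂μ| := by
          rw [avgOp, abs_mul, abs_of_pos (inv_pos.mpr ha)]
      _ ≤ m.toReal⁻¹ * K.toReal :=
          mul_le_mul hainv hI (abs_nonneg _) (by positivity)
      _ = M := by simp [hMdef, ENNReal.toReal_mul, ENNReal.toReal_inv]
  -- the vector of values lies in the cube
  set Φ : Fin n → ℝ := fun i => avgOp μ t f (pts i) with hΦdef
  have hΦcube : Φ ∈ (Set.Icc (fun _ => -M) (fun _ => M) : Set (Fin n → ℝ)) := by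
    rw [Set.mem_Icc]
    constructor <;> intro i <;>
      [exact neg_le_of_abs_le (hbound _ (hptsE i)); exact le_of_abs_le (hbound _ (hptsE i))]
  obtain ⟨c, hcnet, hc⟩ := Set.mem_iUnion₂.mp (hnetcov hΦcube)
  have hcdist : ∀ i, |Φ i - c i| < η := by
    intro i
    have := (dist_le_pi_dist Φ c i).trans_lt (mem_ball.mp hc)
    rwa [Real.dist_eq] at this
  refine ⟨mk c, Finset.mem_image_of_mem mk (hnetfin.mem_toFinset.mpr hcnet), ?_⟩
  -- pointwise estimate
  have hpt : ∀ x : X, ‖E.indicator (avgOp μ t f) x - mk c x‖ ≤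
      ‖B0.indicator (fun _ => τ) x‖ := by
    intro x
    by_cases hx : x ∈ E
    · have hxB0 : x ∈ B0 := hER hx
      rw [Set.indicator_of_mem hx, Set.indicator_of_mem hxB0, hmkdef]
      simp only [dif_pos hx]
      rw [Real.norm_eq_abs, Real.norm_eq_abs, abs_of_pos hτpos]
      set i : Fin n := (hcov x hx).choose with hidef
      have hi : dist x (pts i) < δ := (hcov x hx).choose_spec
      have h1 : |avgOp μ t f x - avgOp μ t f (pts i)| ≤ ω :=
        hequi f hfmem hfC x hx (pts i) (hptsE i) hi
      have h2 : |avgOp μ t f (pts i) - c i| < η := hcdist i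
      calc |avgOp μ t f x - c i|
          ≤ |avgOp μ t f x - avgOp μ t f (pts i)| + |avgOp μ t f (pts i) - c i| :=
            abs_sub_le _ _ _
        _ ≤ ω + η := add_le_add h1 h2.le
        _ = τ := by rw [hωdef, hηdef]; ring
    · rw [Set.indicator_of_notMem hx]
      have hz : mk c x = 0 := dif_neg hx
      rw [hz]
      simpa using norm_nonneg _
  calc eLpNorm (fun x => E.indicator (avgOp μ t f) x - mk c x) p μ
      ≤ eLpNorm (B0.indicator (fun _ => τ)) p μ := eLpNorm_mono hpt
    _ = ‖τ‖₊ * μ B0 ^ (1/p.toReal) :=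
        eLpNorm_indicator_const measurableSet_closedBall hp0 hp2
    _ = ENNReal.ofReal τ * W := by
        rw [hWdef, ← enorm_eq_nnnorm, Real.enorm_eq_ofReal hτpos.le]
    _ ≤ ε := hτε
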